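/- arXiv:1707.09866 — 2 statements merged into one kernel-verified Lean document; each statement's English description precedes it below -/
import Mathlib

section
/- Let n, k, V be positive integers and let U^1, ..., U^V be real n×k matrices, each with orthonormal columns (i.e., (U^v)ᵀ U^v = I_k for every v). Let Ũ ∈ ℝ^{n×(Vk)} be the horizontal concatenation [U^1 U^2 ⋯ U^V]. Then any real n×k matrix U* with orthonormal columns whose columns are eigenvectors of the symmetric positive semidefinite matrix Ũ Ũᵀ corresponding to its k largest eigenvalues is a minimizer of the objective ∑_{v=1}^V ‖U Uᵀ − U^v (U^v)ᵀ‖_F² over all real n×k matrices U satisfying Uᵀ U = I_k, where ‖·‖_F denotes the Frobenius norm. -/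
/-!
Each `U Uᵀ` with `Uᵀ U = 1` is an orthogonal projection of trace `k`, so the objective equals
`2Vk - 2 tr (Uᵀ H U)` with `H = Ũ Ũᵀ = ∑ v, U^v (U^v)ᵀ`, and it suffices to show that `U*`
maximizes `tr (Uᵀ H U)` (Ky Fan). In an orthonormal eigenbasis `Q` of `H`, with `W = Qᵀ U`,
`tr (Uᵀ H U) = ∑ i, λ i * (W Wᵀ) i i`, where the diagonal of the projection `W Wᵀ` lies in
`[0, 1]` and sums to `k`; such a weighted sum is at most the sum of the `k` largest `λ i`,
which is the value `∑ j, μ j` attained at `U*`.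
-/

open Finset Matrix

lemma sum_mul_le_sum_of_forall_le {ι : Type*} [Fintype ι] [DecidableEq ι] {lam s : ι → ℝ}
    {R : Finset ι} (hs : ∀ i, s i ∈ Set.Icc 0 1) (hsum : ∑ i, s i = #R)
    (htop : ∀ i ∉ R, ∀ j ∈ R, lam i ≤ lam j) :
    ∑ i, lam i * s i ≤ ∑ i ∈ R, lam i := by
  rcases R.eq_empty_or_nonempty with rfl | hR
  · have hs0 : ∀ i, s i = 0 := by
      simpa [sum_eq_zero_iff_of_nonneg fun i _ => (hs i).1] using hsum
    simp [hs0]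
  set m := R.inf' hR lam
  -- `m` separates `lam` on `R` from `lam` off `R`, so `(lam i - m) * (s i - 1_R i) ≤ 0`
  have hterm : ∀ i,
      lam i * (s i - if i ∈ R then 1 else 0) ≤ m * (s i - if i ∈ R then 1 else 0) := by
    intro i
    by_cases hi : i ∈ R
    · have : m ≤ lam i := inf'_le lam hi
      simp only [hi, if_true]
      nlinarith [(hs i).2]
    · have : lam i ≤ m := le_inf' _ _ fun j hj => htop i hi j hj
      simp only [hi, if_false, sub_zero]
      nlinarith [(hs i).1]
  have := sum_le_sum fun i (_ : i ∈ univ) => hterm i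
  simp only [mul_sub, sum_sub_distrib, ← mul_sum, hsum, mul_ite, mul_one, mul_zero, ← sum_filter,
    filter_mem_eq_inter, univ_inter, sum_const, nsmul_eq_mul] at this
  linarith

namespace Matrix

section Projection

variable {m κ κ' ι γ R : Type*} [Fintype κ] [Fintype κ'] [Fintype ι]

lemma isIdempotentElem_mul_transpose [Fintype m] [Semiring R] [DecidableEq κ] {U : Matrix m κ R}
    (hU : Uᵀ * U = 1) : IsIdempotentElem (U * Uᵀ) := by
  rw [IsIdempotentElem, Matrix.mul_assoc, ← Matrix.mul_assoc Uᵀ, hU, Matrix.one_mul]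

lemma trace_mul_transpose [Fintype m] [CommSemiring R] [DecidableEq κ] {U : Matrix m κ R}
    (hU : Uᵀ * U = 1) : trace (U * Uᵀ) = Fintype.card κ := by
  rw [trace_mul_comm, hU, trace_one]

lemma trace_sub_mul_transpose_sub [Fintype m] [CommRing R] [DecidableEq κ] [DecidableEq κ']
    {U : Matrix m κ R} {A : Matrix m κ' R} (hU : Uᵀ * U = 1) (hA : Aᵀ * A = 1) :
    trace ((U * Uᵀ - A * Aᵀ) * (U * Uᵀ - A * Aᵀ)ᵀ) =
      Fintype.card κ + Fintype.card κ' - 2 * trace (Uᵀ * (A * Aᵀ) * U) := by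
  have hsymm : (U * Uᵀ - A * Aᵀ)ᵀ = U * Uᵀ - A * Aᵀ := by
    simp only [transpose_sub, transpose_mul, transpose_transpose]
  have hcross : trace (A * Aᵀ * (U * Uᵀ)) = trace (Uᵀ * (A * Aᵀ) * U) := by
    rw [← Matrix.mul_assoc, trace_mul_comm]
    simp only [Matrix.mul_assoc]
  have hcross' : trace (U * Uᵀ * (A * Aᵀ)) = trace (Uᵀ * (A * Aᵀ) * U) := by
    rw [trace_mul_comm, hcross]
  rw [hsymm, sub_mul, mul_sub, mul_sub, (isIdempotentElem_mul_transpose hU).eq,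
    (isIdempotentElem_mul_transpose hA).eq, trace_sub, trace_sub, trace_sub,
    trace_mul_transpose hU, trace_mul_transpose hA, hcross, hcross']
  ring

lemma sum_trace_sub_mul_transpose_sub [Fintype m] [CommRing R] [DecidableEq κ] [DecidableEq κ']
    {U : Matrix m κ R} {A : ι → Matrix m κ' R} (hU : Uᵀ * U = 1) (hA : ∀ v, (A v)ᵀ * A v = 1) :
    ∑ v, trace ((U * Uᵀ - A v * (A v)ᵀ) * (U * Uᵀ - A v * (A v)ᵀ)ᵀ) =
      Fintype.card ι * (Fintype.card κ + Fintype.card κ') -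
        2 * trace (Uᵀ * (∑ v, A v * (A v)ᵀ) * U) := by
  simp only [trace_sub_mul_transpose_sub hU (hA _), sum_sub_distrib, sum_const, card_univ,
    nsmul_eq_mul, Matrix.mul_sum, Matrix.sum_mul, trace_sum, mul_sum]

lemma of_equiv_mul_transpose [NonUnitalNonAssocSemiring R] [Fintype γ] (e : ι × κ ≃ γ)
    (A : ι → Matrix m κ R) :
    (of fun i c => A (e.symm c).1 i (e.symm c).2) * (of fun i c => A (e.symm c).1 i (e.symm c).2)ᵀ
      = ∑ v, A v * (A v)ᵀ := by
  ext i i'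
  simp only [mul_apply, transpose_apply, of_apply, sum_apply]
  rw [← e.sum_comp, Fintype.sum_prod_type]
  simp only [Equiv.symm_apply_apply]

end Projection

section Spectral

variable {n κ R : Type*} [Fintype n] [Fintype κ]

lemma trace_transpose_mul_mul_eq_sum_of_mulVec_eq_smul [DecidableEq κ] [CommRing R]
    {H : Matrix n n R} {U : Matrix n κ R} (hU : Uᵀ * U = 1) {μ : κ → R}
    (hμ : ∀ j, H *ᵥ (fun i => U i j) = μ j • (fun i => U i j)) :
    trace (Uᵀ * H * U) = ∑ j, μ j := by
  have hHU : H * U = U * diagonal μ := by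
    ext i j
    rw [mul_diagonal, mul_comm]
    exact congrFun (hμ j) i
  rw [Matrix.mul_assoc, hHU, ← Matrix.mul_assoc, hU, Matrix.one_mul, trace_diagonal]

lemma trace_transpose_mul_diagonal_mul [CommSemiring R] [DecidableEq n] (W : Matrix n κ R)
    (d : n → R) : trace (Wᵀ * diagonal d * W) = ∑ i, d i * (W * Wᵀ) i i := by
  rw [Matrix.mul_assoc, trace_mul_comm, Matrix.mul_assoc, trace]
  simp only [diag_apply, diagonal_mul]

lemma diag_eq_sum_mul_self_of_isIdempotentElem [CommSemiring R] {P : Matrix n n R}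
    (hPt : Pᵀ = P) (hP : IsIdempotentElem P) (i : n) : P i i = ∑ j, P i j * P i j := by
  conv_lhs => rw [← hP.eq]
  rw [mul_apply]
  exact sum_congr rfl fun j _ => by rw [← transpose_apply P j i, hPt]

lemma diag_mem_Icc_of_isIdempotentElem {P : Matrix n n ℝ} (hPt : Pᵀ = P)
    (hP : IsIdempotentElem P) (i : n) : P i i ∈ Set.Icc 0 1 := by
  have hdiag := diag_eq_sum_mul_self_of_isIdempotentElem hPt hP i
  have hsq : P i i * P i i ≤ P i i := by
    conv_rhs => rw [hdiag]
    exact single_le_sum (f := fun j => P i j * P i j) (fun j _ => mul_self_nonneg _) (mem_univ i)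
  have hnonneg : 0 ≤ P i i := hdiag ▸ sum_nonneg fun j _ => mul_self_nonneg _
  exact ⟨hnonneg, by nlinarith⟩

lemma IsHermitian.trace_transpose_mul_mul_le_sum_eigenvalues [DecidableEq n] [DecidableEq κ]
    {H : Matrix n n ℝ} (hH : H.IsHermitian) {U : Matrix n κ ℝ} (hU : Uᵀ * U = 1)
    {R : Finset n} (hR : #R = Fintype.card κ)
    (htop : ∀ i ∉ R, ∀ j ∈ R, hH.eigenvalues i ≤ hH.eigenvalues j) :
    trace (Uᵀ * H * U) ≤ ∑ i ∈ R, hH.eigenvalues i := by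
  set Q : Matrix n n ℝ := (hH.eigenvectorUnitary : Matrix n n ℝ)
  have hQ : Q * Qᵀ = 1 := by
    simpa [Q, star_eq_conjTranspose] using Unitary.coe_mul_star_self hH.eigenvectorUnitary
  set W := Qᵀ * U
  have hW : Wᵀ * W = 1 := by
    rw [transpose_mul, transpose_transpose, Matrix.mul_assoc, ← Matrix.mul_assoc Q, hQ,
      Matrix.one_mul, hU]
  have hUHU : Uᵀ * H * U = Wᵀ * diagonal hH.eigenvalues * W := by
    conv_lhs => rw [hH.spectral_theorem]
    simp [W, Q, Unitary.conjStarAlgAut_apply, star_eq_conjTranspose, transpose_mul,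
      Matrix.mul_assoc, RCLike.ofReal_real_eq_id]
  have hWWt : (W * Wᵀ)ᵀ = W * Wᵀ := by rw [transpose_mul, transpose_transpose]
  rw [hUHU, trace_transpose_mul_diagonal_mul]
  refine sum_mul_le_sum_of_forall_le
    (diag_mem_Icc_of_isIdempotentElem hWWt (isIdempotentElem_mul_transpose hW)) ?_ htop
  rw [hR, ← trace_mul_transpose hW]
  rfl

end Spectral

end Matrix

theorem top_eigenvectors_minimize_disagreement_general
    (n k V : ℕ)
    (Uv : Fin V → Matrix (Fin n) (Fin k) ℝ)
    (hUv : ∀ v, (Uv v)ᵀ * Uv v = 1)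
    (tildeU : Matrix (Fin n) (Fin (V * k)) ℝ)
    (htildeU : tildeU = Matrix.of fun i c =>
      Uv (finProdFinEquiv.symm c).1 i (finProdFinEquiv.symm c).2)
    (hH : (tildeU * tildeUᵀ).IsHermitian)
    (Ustar : Matrix (Fin n) (Fin k) ℝ)
    (hUstar : Ustarᵀ * Ustar = 1)
    -- the columns of `U*` are eigenvectors of `Ũ Ũᵀ` corresponding to its `k` largest
    -- eigenvalues (with multiplicity)
    (heig : ∃ μ : Fin k → ℝ,
      (∀ j : Fin k, (tildeU * tildeUᵀ) *ᵥ (fun i => Ustar i j) = μ j • (fun i => Ustar i j)) ∧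
      (∃ g : Fin k → Fin n, Function.Injective g ∧
        (∀ j, μ j = hH.eigenvalues (g j)) ∧
        (∀ i : Fin n, i ∉ Set.range g → ∀ j : Fin k, hH.eigenvalues i ≤ μ j))) :
    ∀ U : Matrix (Fin n) (Fin k) ℝ, Uᵀ * U = 1 →
      (∑ v, trace ((Ustar * Ustarᵀ - Uv v * (Uv v)ᵀ) * (Ustar * Ustarᵀ - Uv v * (Uv v)ᵀ)ᵀ))
        ≤ (∑ v, trace ((U * Uᵀ - Uv v * (Uv v)ᵀ) * (U * Uᵀ - Uv v * (Uv v)ᵀ)ᵀ)) := by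
  intro U hU
  obtain ⟨μ, hμ, g, hg, hμg, hμ_top⟩ := heig
  have hgram : tildeU * tildeUᵀ = ∑ v, Uv v * (Uv v)ᵀ := by
    rw [htildeU, of_equiv_mul_transpose]
  rw [sum_trace_sub_mul_transpose_sub hUstar hUv, sum_trace_sub_mul_transpose_sub hU hUv,
    ← hgram]
  have hstar : trace (Ustarᵀ * (tildeU * tildeUᵀ) * Ustar) =
      ∑ i ∈ univ.image g, hH.eigenvalues i := by
    rw [trace_transpose_mul_mul_eq_sum_of_mulVec_eq_smul hUstar hμ,
      sum_image fun _ _ _ _ h => hg h]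
    exact sum_congr rfl fun j _ => hμg j
  have hbound : trace (Uᵀ * (tildeU * tildeUᵀ) * U) ≤ ∑ i ∈ univ.image g, hH.eigenvalues i := by
    refine hH.trace_transpose_mul_mul_le_sum_eigenvalues hU
      (by simp [card_image_of_injective _ hg]) ?_
    simp only [mem_image, mem_univ, true_and, forall_exists_index, forall_apply_eq_imp_iff]
    exact fun i hi j => hμg j ▸ hμ_top i (by simpa using hi) j
  linarith

/-- Let `U^1, …, U^V` be real `n × k` matrices with orthonormal columns and
let `Ũ = [U^1 U^2 ⋯ U^V] ∈ ℝ^{n × (V·k)}` be their horizontal concatenation (column `j + k·v`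
of `Ũ` is column `j` of `U^v`).  Then any real `n × k` matrix `U*` with orthonormal columns
whose columns are eigenvectors of the symmetric PSD matrix `Ũ Ũᵀ` corresponding to its `k`
largest eigenvalues (with multiplicity) minimizes `∑ v ‖U Uᵀ − U^v (U^v)ᵀ‖_F²` over all real
`n × k` matrices `U` with `Uᵀ U = I_k`, where `‖B‖_F² = tr (B Bᵀ)`. -/
theorem top_eigenvectors_minimize_disagreement
    (n k V : ℕ) (hn : 0 < n) (hk : 0 < k) (hV : 0 < V)
    (Uv : Fin V → Matrix (Fin n) (Fin k) ℝ)
    (hUv : ∀ v, (Uv v)ᵀ * Uv v = 1)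
    (tildeU : Matrix (Fin n) (Fin (V * k)) ℝ)
    (htildeU : tildeU = Matrix.of fun i c =>
      Uv (finProdFinEquiv.symm c).1 i (finProdFinEquiv.symm c).2)
    (hH : (tildeU * tildeUᵀ).IsHermitian)
    (Ustar : Matrix (Fin n) (Fin k) ℝ)
    (hUstar : Ustarᵀ * Ustar = 1)
    -- the columns of `U*` are eigenvectors of `Ũ Ũᵀ` corresponding to its `k` largest
    -- eigenvalues (with multiplicity)
    (heig : ∃ μ : Fin k → ℝ,
      (∀ j : Fin k, (tildeU * tildeUᵀ) *ᵥ (fun i => Ustar i j) = μ j • (fun i => Ustar i j)) ∧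
      (∃ g : Fin k → Fin n, Function.Injective g ∧
        (∀ j, μ j = hH.eigenvalues (g j)) ∧
        (∀ i : Fin n, i ∉ Set.range g → ∀ j : Fin k, hH.eigenvalues i ≤ μ j))) :
    ∀ U : Matrix (Fin n) (Fin k) ℝ, Uᵀ * U = 1 →
      (∑ v, trace ((Ustar * Ustarᵀ - Uv v * (Uv v)ᵀ) * (Ustar * Ustarᵀ - Uv v * (Uv v)ᵀ)ᵀ))
        ≤ (∑ v, trace ((U * Uᵀ - Uv v * (Uv v)ᵀ) * (U * Uᵀ - Uv v * (Uv v)ᵀ)ᵀ)) :=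
  top_eigenvectors_minimize_disagreement_general n k V Uv hUv tildeU htildeU hH Ustar hUstar heig
end

section
/- Let M be a real symmetric n×n matrix and let k ≤ n. Then the maximum of tr(Uᵀ M U) over all real n×k matrices U with orthonormal columns (Uᵀ U = I_k) equals the sum of the k largest eigenvalues of M, and this maximum is attained when the columns of U are orthonormal eigenvectors of M corresponding to its k largest eigenvalues. -/
/-!
With `M = V D Vᵀ` for an orthogonal `V`, and `W = Vᵀ U`, one has `tr (Uᵀ M U) = ∑ i, λᵢ cᵢ`
where `cᵢ` are the diagonal entries of the orthogonal projection `W Wᵀ`. These weights lie in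
`[0, 1]` and sum to `k`, and a linear form with antitone coefficients is maximized over such
weights by the indicator of the `k` largest coefficients. If the columns of `U` are eigenvectors,
`tr (Uᵀ M U)` is the sum of their eigenvalues, and any two index sets of `k` largest eigenvalues
carry the same sum.
-/

open Matrix Finset

def IsTopSet {ι R : Type*} [LE R] (a : ι → R) (s : Finset ι) : Prop :=
  ∀ i ∈ s, ∀ j ∉ s, a j ≤ a i

section TopSet

variable {ι R : Type*} [Fintype ι] [CommRing R] [LinearOrder R] [IsStrictOrderedRing R]
  {a : ι → R} {s : Finset ι}

theorem IsTopSet.sum_mul_le (hs : IsTopSet a s) {c : ι → R} (hc0 : ∀ i, 0 ≤ c i)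
    (hc1 : ∀ i, c i ≤ 1) (hc : ∑ i, c i = #s) :
    ∑ i, a i * c i ≤ ∑ i ∈ s, a i := by
  classical
  obtain rfl | hne := s.eq_empty_or_nonempty
  · have hc_zero : ∀ i, c i = 0 := by
      simpa [sum_eq_zero_iff_of_nonneg fun i _ => hc0 i] using hc
    simp [hc_zero]
  -- the threshold `t = min_s a` separates the values of `a` on `s` from those off `s`
  set t := s.inf' hne a
  have hpointwise : ∀ i,
      a i * c i - (if i ∈ s then a i else 0) ≤ t * (c i - if i ∈ s then 1 else 0) := by
    intro i
    split_ifs with hi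
    · nlinarith [s.inf'_le a hi, hc1 i]
    · nlinarith [s.le_inf' hne a fun j hj => hs j hj i hi, hc0 i]
  have := sum_le_sum fun i (_ : i ∈ univ) => hpointwise i
  simp only [sum_sub_distrib, ← mul_sum, sum_ite_mem, univ_inter, hc] at this
  simpa using this

theorem IsTopSet.sum_eq {t : Finset ι} (hs : IsTopSet a s) (ht : IsTopSet a t) (h : #s = #t) :
    ∑ i ∈ s, a i = ∑ i ∈ t, a i := by
  classical
  have hle : ∀ {s t : Finset ι}, IsTopSet a s → #t = #s → ∑ i ∈ t, a i ≤ ∑ i ∈ s, a i := by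
    intro s t hs h
    simpa [sum_ite_mem, h] using
      hs.sum_mul_le (c := fun i => if i ∈ t then 1 else 0) (fun i => by split_ifs <;> norm_num)
        (fun i => by split_ifs <;> norm_num) (by simp [h])
  exact le_antisymm (hle ht h) (hle hs h.symm)

end TopSet

theorem isTopSet_map_castLEEmb {n k : ℕ} {R : Type*} [Preorder R] {a : Fin n → R}
    (ha : Antitone a) (hkn : k ≤ n) :
    IsTopSet a (univ.map (Fin.castLEEmb hkn)) := by
  intro i hi j hj
  simp only [mem_map, mem_univ, Fin.castLEEmb_apply, true_and, not_exists] at hi hj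
  obtain ⟨i, rfl⟩ := hi
  have hkj : k ≤ j := by
    by_contra! hjk
    exact hj ⟨j, hjk⟩ rfl
  exact ha (Fin.le_iff_val_le_val.mpr (by simp; omega))

theorem IsTopSet.map_equiv {ι κ R : Type*} [LE R] {a : κ → R} (e : ι ≃ κ) {s : Finset ι}
    (hs : IsTopSet (a ∘ e) s) :
    IsTopSet a (s.map e.toEmbedding) := by
  intro i hi j hj
  rw [mem_map_equiv] at hi hj
  simpa using hs _ hi _ hj

section Ordered

variable {m k R : Type*} [Fintype k] [CommRing R] [LinearOrder R] [IsStrictOrderedRing R]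

theorem Matrix.mul_transpose_diag_nonneg (W : Matrix m k R) (i : m) : 0 ≤ (W * Wᵀ) i i := by
  simpa [mul_apply] using sum_nonneg fun j (_ : j ∈ univ) => mul_self_nonneg (W i j)

theorem Matrix.mul_transpose_diag_le_one [Fintype m] [DecidableEq k] {W : Matrix m k R}
    (hW : Wᵀ * W = 1) (i : m) : (W * Wᵀ) i i ≤ 1 := by
  -- `P = W Wᵀ` is a symmetric idempotent, so `P i i = ∑ l, P i l ^ 2 ≥ P i i ^ 2`
  set P := W * Wᵀ
  have hidem : P * P = P := by
    rw [Matrix.mul_assoc, ← Matrix.mul_assoc Wᵀ, hW, Matrix.one_mul]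
  have hsymm : Pᵀ = P := by simp [P, transpose_mul]
  have hsq : P i i * P i i ≤ P i i := by
    calc P i i * P i i ≤ ∑ l, P i l * P i l :=
          single_le_sum (f := fun l => P i l * P i l) (fun l _ => mul_self_nonneg _)
            (mem_univ i)
      _ = (P * P) i i := by
          simp only [mul_apply]
          exact sum_congr rfl fun l _ => by rw [← transpose_apply P l i, hsymm]
      _ = P i i := by rw [hidem]
  nlinarith [W.mul_transpose_diag_nonneg i]

end Ordered

theorem Matrix.trace_transpose_mul_diagonal_mul_s2 {m k R : Type*} [Fintype m] [Fintype k]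
    [DecidableEq m] [CommRing R] (d : m → R) (W : Matrix m k R) :
    trace (Wᵀ * diagonal d * W) = ∑ i, d i * (W * Wᵀ) i i := by
  rw [trace_mul_cycle]
  simp [trace, mul_diagonal, mul_comm]

theorem IsTopSet.trace_transpose_mul_diagonal_mul_le {m k R : Type*} [Fintype m] [Fintype k]
    [DecidableEq m] [DecidableEq k] [CommRing R] [LinearOrder R] [IsStrictOrderedRing R]
    {d : m → R} {s : Finset m} (hs : IsTopSet d s) {W : Matrix m k R} (hW : Wᵀ * W = 1)
    (hcard : #s = Fintype.card k) :
    trace (Wᵀ * diagonal d * W) ≤ ∑ i ∈ s, d i := by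
  rw [trace_transpose_mul_diagonal_mul_s2]
  refine hs.sum_mul_le W.mul_transpose_diag_nonneg (mul_transpose_diag_le_one hW) ?_
  rw [hcard, ← trace_one (n := k) (R := R), ← hW, ← trace_mul_comm]
  rfl

theorem Matrix.trace_transpose_mul_mul_of_mulVec_col {m k R : Type*} [Fintype m] [Fintype k]
    [DecidableEq k] [CommRing R] {M : Matrix m m R} {U : Matrix m k R} (hU : Uᵀ * U = 1)
    {μ : k → R} (hcol : ∀ j, M *ᵥ (fun i => U i j) = μ j • fun i => U i j) :
    trace (Uᵀ * M * U) = ∑ j, μ j := by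
  have hMU : M * U = U * diagonal μ := by
    ext i j
    rw [mul_diagonal, mul_comm]
    simpa [mulVec, dotProduct, mul_apply] using congrFun (hcol j) i
  rw [Matrix.mul_assoc, hMU, ← Matrix.mul_assoc, hU, Matrix.one_mul, trace_diagonal]

namespace Matrix.IsHermitian

variable {n k : Type*} [Fintype n] [DecidableEq n] [DecidableEq k] {M : Matrix n n ℝ}
  (hM : M.IsHermitian)

theorem eq_eigenvectorUnitary_mul_diagonal_mul_transpose :
    M = (hM.eigenvectorUnitary : Matrix n n ℝ) * diagonal hM.eigenvalues *
      (hM.eigenvectorUnitary : Matrix n n ℝ)ᵀ := by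
  conv_lhs => rw [hM.spectral_theorem]
  simp [Unitary.conjStarAlgAut_apply, star_eq_conjTranspose]

theorem trace_transpose_mul_mul_le [Fintype k] {s : Finset n} (hs : IsTopSet hM.eigenvalues s)
    (hcard : #s = Fintype.card k) {U : Matrix n k ℝ} (hU : Uᵀ * U = 1) :
    trace (Uᵀ * M * U) ≤ ∑ i ∈ s, hM.eigenvalues i := by
  set V := (hM.eigenvectorUnitary : Matrix n n ℝ)
  have hVV : V * Vᵀ = 1 := by
    simpa [star_eq_conjTranspose] using Unitary.mul_star_self_of_mem hM.eigenvectorUnitary.2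
  have hW : (Vᵀ * U)ᵀ * (Vᵀ * U) = 1 := by
    rw [transpose_mul, transpose_transpose, Matrix.mul_assoc, ← Matrix.mul_assoc V, hVV,
      Matrix.one_mul, hU]
  have htr : Uᵀ * M * U = (Vᵀ * U)ᵀ * diagonal hM.eigenvalues * (Vᵀ * U) := by
    conv_lhs => rw [hM.eq_eigenvectorUnitary_mul_diagonal_mul_transpose]
    simp only [V, transpose_mul, transpose_transpose, Matrix.mul_assoc]
  rw [htr]
  exact hs.trace_transpose_mul_diagonal_mul_le hW hcard

theorem transpose_mul_eigenvectorUnitary_submatrix {f : k → n} (hf : Function.Injective f) :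
    ((hM.eigenvectorUnitary : Matrix n n ℝ).submatrix id f)ᵀ *
      (hM.eigenvectorUnitary : Matrix n n ℝ).submatrix id f = 1 := by
  have hVV : (hM.eigenvectorUnitary : Matrix n n ℝ)ᵀ * hM.eigenvectorUnitary = 1 := by
    simpa [star_eq_conjTranspose] using Unitary.star_mul_self_of_mem hM.eigenvectorUnitary.2
  rw [transpose_submatrix, ← submatrix_mul _ _ _ _ _ Function.bijective_id, hVV,
    submatrix_one f hf]

theorem trace_eigenvectorUnitary_submatrix [Fintype k] {f : k → n} (hf : Function.Injective f) :
    trace (((hM.eigenvectorUnitary : Matrix n n ℝ).submatrix id f)ᵀ * M *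
      (hM.eigenvectorUnitary : Matrix n n ℝ).submatrix id f) = ∑ j, hM.eigenvalues (f j) :=
  trace_transpose_mul_mul_of_mulVec_col (hM.transpose_mul_eigenvectorUnitary_submatrix hf)
    fun j => hM.mulVec_eigenvectorBasis (f j)

end Matrix.IsHermitian

/-- **Ky Fan / Rayleigh–Ritz.** For a real symmetric `n × n` matrix `M` and
`k ≤ n`, the maximum of `tr (Uᵀ M U)` over real `n × k` matrices `U` with orthonormal columns
(`Uᵀ U = I_k`) equals the sum of the `k` largest eigenvalues of `M` (the eigenvalues being
enumerated in any nonincreasing order), and the maximum is attained whenever the columns of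
`U` are orthonormal eigenvectors of `M` corresponding to its `k` largest eigenvalues. -/
theorem trace_max_eq_sum_k_largest_eigenvalues
    (n k : ℕ) (hkn : k ≤ n)
    (M : Matrix (Fin n) (Fin n) ℝ) (hM : M.IsHermitian)
    (e : Equiv.Perm (Fin n)) (he : Antitone (fun i => hM.eigenvalues (e i))) :
    IsGreatest
      {t : ℝ | ∃ U : Matrix (Fin n) (Fin k) ℝ, Uᵀ * U = 1 ∧ t = trace (Uᵀ * M * U)}
      (∑ j : Fin k, hM.eigenvalues (e (Fin.castLE hkn j)))
    ∧ (∀ U : Matrix (Fin n) (Fin k) ℝ, Uᵀ * U = 1 →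
        -- the columns of `U` are eigenvectors of `M` corresponding to its `k` largest
        -- eigenvalues (with multiplicity)
        (∃ μ : Fin k → ℝ,
          (∀ j : Fin k, M *ᵥ (fun i => U i j) = μ j • (fun i => U i j)) ∧
          (∃ g : Fin k → Fin n, Function.Injective g ∧
            (∀ j, μ j = hM.eigenvalues (g j)) ∧
            (∀ i : Fin n, i ∉ Set.range g → ∀ j : Fin k, hM.eigenvalues i ≤ μ j))) →
        trace (Uᵀ * M * U) = ∑ j : Fin k, hM.eigenvalues (e (Fin.castLE hkn j))) := by
  set f := (Fin.castLEEmb hkn).trans e.toEmbedding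
  set s := univ.map f
  have hs : IsTopSet hM.eigenvalues s := by
    simpa [s, f, ← Finset.map_map] using
      (isTopSet_map_castLEEmb he hkn).map_equiv (a := hM.eigenvalues) e
  have hsum :
      ∑ i ∈ s, hM.eigenvalues i = ∑ j : Fin k, hM.eigenvalues (e (Fin.castLE hkn j)) := by
    simp [s, f]
  have hcard : #s = Fintype.card (Fin k) := by simp [s]
  refine ⟨⟨⟨_, hM.transpose_mul_eigenvectorUnitary_submatrix f.injective,
    (hM.trace_eigenvectorUnitary_submatrix f.injective).symm⟩, ?_⟩, ?_⟩
  · rintro t ⟨U, hU, rfl⟩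
    exact hsum ▸ hM.trace_transpose_mul_mul_le hs hcard hU
  · rintro U hU ⟨μ, hcol, g, hg, hμ, hg_top⟩
    have hgs : IsTopSet hM.eigenvalues (univ.map ⟨g, hg⟩) := by
      intro i hi j hj
      simp only [mem_map, mem_univ, Function.Embedding.coeFn_mk, true_and] at hi hj
      obtain ⟨l, rfl⟩ := hi
      exact hμ l ▸ hg_top j (fun ⟨x, hx⟩ => hj ⟨x, hx⟩) l
    rw [trace_transpose_mul_mul_of_mulVec_col hU hcol, ← hsum, ← hgs.sum_eq hs (by simp [s])]
    simp [hμ]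
end
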